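/- Let m, n₁,…,n_l be positive integers, n := m + n₁ + ⋯ + n_l, and let S be the polynomial ring over 𝔽₂ = ℤ/2 in the indeterminates α₁,…,α_m and β_i^{(p)} for 1 ≤ p ≤ l, 1 ≤ i ≤ ⌊n_p/2⌋. With the conventions α₀ := 1, α_i := α_{2m−i} for m < i ≤ 2m, α_i := 0 for i < 0 or i > 2m, β_0^{(p)} := 1, β_i^{(p)} := β_{n_p−i}^{(p)} for ⌊n_p/2⌋ < i ≤ n_p, β_i^{(p)} := 0 for i < 0 or i > n_p, define μ_j := Σ_{a₁+⋯+a_l = j} β_{a₁}^{(1)}⋯β_{a_l}^{(l)} and ν_k := Σ_{i=0}^{⌊k/2⌋} α_{k−2i}·μ_i + (binom(2n, k) mod 2). Set h' := ⌊m/2⌋ + ⌊n₁/2⌋ + ⋯ + ⌊n_l/2⌋ and let B ⊆ S be the subring generated by all the β_i^{(p)}. Then for every k ≥ 1: if k is odd, ν_k is a B-linear combination of the ν_j with j odd and 1 ≤ j ≤ m (in particular ν_k lies in the ideal generated by these); if k is even, ν_k is an 𝔽₂-linear combination of the ν_j with j even and 2 ≤ j ≤ 2h' (in particular ν_k lies in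 the ideal generated by these). -/

import Mathlib

/-!
For odd `k` the binomial term vanishes and `ν_k = α_k + ∑_{i ≥ 1} α_{k-2i} μ_i` is a
unitriangular system over `B`; together with `α_{2m-j} = α_j` it expresses every odd-indexed `α`,
hence every odd-indexed `ν`, through `ν_1, ν_3, …` up to index `m`.

For even indices, `ν_{2t}` is the `t`-th coefficient of `Q = A · ∏_p B_p + (X + 1)^N`, where
`A = ∑ α_{2j} X^j` and `B_p = ∑ β_i^{(p)} X^i` are palindromes of degrees `m` and `n_p`,
`N = m + ∑ n_p`, and the binomial term is accounted for by Lucas' theorem. In characteristic `2` a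
palindrome of odd degree is divisible by `X + 1`, so `Q = (X + 1)^r R` with `r` the number of odd
integers among `m, n_1, …, n_l` and `R` a palindrome of degree `N - r = 2h'`. Since `ν_0 = 0`,
inverting the unitriangular factor `(X + 1)^r` shows that `R_0, …, R_{h'}` are `𝔽₂`-combinations
of `ν_2, …, ν_{2h'}`; by palindromy so is every coefficient of `R`, and hence of `Q`.
-/

open MvPolynomial

/-- A sequence (given as a list) `a₁, …, aₙ` in a commutative ring `A` is `A`-regular if for
each `i`, `aᵢ` is not a zero divisor on `A ⧸ (a₁, …, a_{i-1})`. -/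
def IsRegularSeq {A : Type*} [CommRing A] (l : List A) : Prop :=
  ∀ (i : ℕ) (h : i < l.length), ∀ x : A,
    l.get ⟨i, h⟩ * x ∈ Ideal.span {y | y ∈ l.take i} →
      x ∈ Ideal.span {y | y ∈ l.take i}

/-- The element `α_i` of the polynomial ring `S` over `𝔽₂` in the indeterminates
`α₁, …, α_m` and `β_i^{(p)}`, with the conventions `α_0 = 1`, `α_i = α_{2m−i}` for
`m < i ≤ 2m`, and `α_i = 0` for `i > 2m`. -/
noncomputable def alS (m l : ℕ) (n : Fin l → ℕ) (i : ℕ) :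
    MvPolynomial (Fin m ⊕ Σ p : Fin l, Fin (n p / 2)) (ZMod 2) :=
  if h : i ≤ 2 * m then
    (if h1 : 1 ≤ min i (2 * m - i) then X (Sum.inl ⟨min i (2 * m - i) - 1, by omega⟩) else 1)
  else 0

/-- The element `β_i^{(p)}` of `S`, with the conventions `β_0^{(p)} = 1`,
`β_i^{(p)} = β_{n_p−i}^{(p)}` for `⌊n_p/2⌋ < i ≤ n_p`, and `β_i^{(p)} = 0` for `i > n_p`. -/
noncomputable def beS (m l : ℕ) (n : Fin l → ℕ) (p : Fin l) (i : ℕ) :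
    MvPolynomial (Fin m ⊕ Σ p : Fin l, Fin (n p / 2)) (ZMod 2) :=
  if h : i ≤ n p then
    (if h1 : 1 ≤ min i (n p - i) then X (Sum.inr ⟨p, ⟨min i (n p - i) - 1, by omega⟩⟩) else 1)
  else 0

/-- `μ_j := Σ_{a₁+⋯+a_l = j} β_{a₁}^{(1)} ⋯ β_{a_l}^{(l)}`. -/
noncomputable def muS (m l : ℕ) (n : Fin l → ℕ) (j : ℕ) :
    MvPolynomial (Fin m ⊕ Σ p : Fin l, Fin (n p / 2)) (ZMod 2) :=
  ∑ a ∈ (Fintype.piFinset fun _ : Fin l => Finset.range (j + 1)).filter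
      (fun a => ∑ p, a p = j),
    ∏ p, beS m l n p (a p)

/-- `ν_k := Σ_{i=0}^{⌊k/2⌋} α_{k−2i}·μ_i + (binom(2n, k) mod 2)`, with
`n = m + n₁ + ⋯ + n_l`. -/
noncomputable def nuS (m l : ℕ) (n : Fin l → ℕ) (k : ℕ) :
    MvPolynomial (Fin m ⊕ Σ p : Fin l, Fin (n p / 2)) (ZMod 2) :=
  (∑ i ∈ Finset.range (k / 2 + 1), alS m l n (k - 2 * i) * muS m l n i) +
    (Nat.choose (2 * (m + ∑ p, n p)) k :
      MvPolynomial (Fin m ⊕ Σ p : Fin l, Fin (n p / 2)) (ZMod 2))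

/-- The subring `B ⊆ S` generated by all the indeterminates `β_i^{(p)}`. -/
noncomputable def Bsub (m l : ℕ) (n : Fin l → ℕ) :
    Subring (MvPolynomial (Fin m ⊕ Σ p : Fin l, Fin (n p / 2)) (ZMod 2)) :=
  Subring.closure (Set.range fun v : Σ p : Fin l, Fin (n p / 2) => X (Sum.inr v))

section Binomial

variable {R : Type*} [Ring R] [CharP R 2]

theorem cast_choose_two_mul_of_odd (N : ℕ) {k : ℕ} (hk : Odd k) : ((2 * N).choose k : R) = 0 := by
  rw [CharP.cast_eq_zero_iff R 2, ← Nat.modEq_zero_iff_dvd]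
  simpa [Nat.odd_iff.mp hk] using
    Choose.choose_modEq_choose_mod_mul_choose_div_nat (n := 2 * N) (k := k) (p := 2)

theorem cast_choose_two_mul_two_mul (N k : ℕ) :
    ((2 * N).choose (2 * k) : R) = (N.choose k : R) := by
  rw [CharP.natCast_eq_natCast R 2]
  simpa using
    Choose.choose_modEq_choose_mod_mul_choose_div_nat (n := 2 * N) (k := 2 * k) (p := 2)

end Binomial

theorem image_filter_Icc {α : Type*} (f : ℕ → α) (P : ℕ → Prop) [DecidablePred P] (a b : ℕ) :
    f '' ((Finset.Icc a b).filter P : Finset ℕ) = {x | ∃ j, P j ∧ a ≤ j ∧ j ≤ b ∧ x = f j} := by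
  ext x
  simp only [Finset.coe_filter, Finset.mem_Icc, Set.mem_image, Set.mem_ofPred_eq]
  constructor
  · rintro ⟨j, ⟨⟨haj, hjb⟩, hj⟩, rfl⟩
    exact ⟨j, hj, haj, hjb, rfl⟩
  · rintro ⟨j, hj, haj, hjb, rfl⟩
    exact ⟨j, ⟨⟨haj, hjb⟩, hj⟩, rfl⟩

namespace Polynomial

variable {R : Type*} [CommRing R]

theorem coeff_sum_range_monomial (N : ℕ) (f : ℕ → R) (j : ℕ) :
    (∑ i ∈ Finset.range (N + 1), monomial i (f i)).coeff j = if j ≤ N then f j else 0 := by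
  simp only [finsetSum_coeff, coeff_monomial, Finset.sum_ite_eq', Finset.mem_range,
    Nat.lt_succ_iff]

theorem natDegree_sum_range_monomial_le (N : ℕ) (f : ℕ → R) :
    (∑ i ∈ Finset.range (N + 1), monomial i (f i)).natDegree ≤ N :=
  natDegree_le_iff_coeff_eq_zero.mpr fun j hj => by
    rw [coeff_sum_range_monomial, if_neg (by omega)]

theorem reflect_sum_range_monomial {N : ℕ} {f : ℕ → R} (hf : ∀ i ≤ N, f (N - i) = f i) :
    reflect N (∑ i ∈ Finset.range (N + 1), monomial i (f i)) =
      ∑ i ∈ Finset.range (N + 1), monomial i (f i) := by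
  ext j
  rw [coeff_reflect, coeff_sum_range_monomial, coeff_sum_range_monomial]
  rcases le_or_gt j N with hj | hj
  · rw [revAt_le hj, if_pos (Nat.sub_le N j), if_pos hj, hf j hj]
  · rw [revAt_eq_self_of_lt hj]

theorem reflect_prod {ι : Type*} (s : Finset ι) (f : ι → R[X]) (d : ι → ℕ)
    (h : ∀ i ∈ s, (f i).natDegree ≤ d i) :
    reflect (∑ i ∈ s, d i) (∏ i ∈ s, f i) = ∏ i ∈ s, reflect (d i) (f i) := by
  classical
  induction s using Finset.induction with
  | empty => simp [reflect_one]
  | insert a s ha ih =>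
    have hs : ∀ i ∈ s, (f i).natDegree ≤ d i := fun i hi => h i (Finset.mem_insert_of_mem hi)
    rw [Finset.prod_insert ha, Finset.sum_insert ha, Finset.prod_insert ha,
      reflect_mul _ _ (h a (Finset.mem_insert_self a s))
        ((natDegree_prod_le _ _).trans (Finset.sum_le_sum hs)), ih hs]

theorem coeff_prod_univ {ι : Type*} [Fintype ι] [DecidableEq ι] (f : ι → R[X]) (j : ℕ) :
    (∏ i, f i).coeff j =
      ∑ a ∈ (Fintype.piFinset fun _ => Finset.range (j + 1)).filter (fun a => ∑ i, a i = j),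
        ∏ i, (f i).coeff (a i) := by
  rw [← coeff_coe, ← coeToPowerSeries.ringHom_apply, map_prod, PowerSeries.coeff_prod]
  simp only [coeToPowerSeries.ringHom_apply, coeff_coe]
  refine Finset.sum_nbij' (fun d => ⇑d) (fun a => Finsupp.equivFunOnFinite.symm a) (fun d hd => ?_)
    (fun a ha => ?_) (fun d _ => Finsupp.equivFunOnFinite.symm_apply_apply d)
    (fun a _ => Finsupp.equivFunOnFinite.apply_symm_apply a) (fun d _ => rfl)
  · rw [Finset.mem_finsuppAntidiag] at hd
    simp only [Finset.mem_filter, Fintype.mem_piFinset, Finset.mem_range, Nat.lt_succ_iff]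
    refine ⟨fun i => hd.1 ▸ Finset.single_le_sum (fun i _ => Nat.zero_le (d i)) (Finset.mem_univ i),
      hd.1⟩
  · rw [Finset.mem_filter] at ha
    simpa [Finset.mem_finsuppAntidiag] using ha.2

theorem monic_X_add_one : (X + 1 : R[X]).Monic := by
  simpa using monic_X_add_C (1 : R)

theorem reflect_X_add_one_pow (r : ℕ) : reflect r ((X + 1 : R[X]) ^ r) = (X + 1) ^ r := by
  ext j
  rw [coeff_reflect]
  rcases le_or_gt j r with hj | hj
  · rw [revAt_le hj, coeff_X_add_one_pow, coeff_X_add_one_pow, Nat.choose_symm hj]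
  · rw [revAt_eq_self_of_lt hj]

theorem X_add_one_dvd_of_reflect_eq [CharP R 2] {N : ℕ} (hN : Odd N) {f : R[X]}
    (hdeg : f.natDegree ≤ N) (hf : reflect N f = f) : X + 1 ∣ f := by
  have hsymm : ∀ i ≤ N, f.coeff (N - i) = f.coeff i := fun i hi => by
    conv_rhs => rw [← hf, coeff_reflect, revAt_le hi]
  have heval : f.IsRoot 1 := by
    rw [IsRoot, eval_eq_sum_range' (Nat.lt_succ_of_le hdeg)]
    simp only [one_pow, mul_one]
    -- the terms cancel in pairs `i ↔ N - i`, which never coincide as `N` is odd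
    refine Finset.sum_involution (fun i _ => N - i) (fun i hi => ?_) (fun i hi _ => ?_)
      (fun i hi => ?_) (fun i hi => ?_) <;> rw [Finset.mem_range] at hi
    · rw [hsymm i (by omega)]
      exact CharTwo.add_self_eq_zero _
    · obtain ⟨t, rfl⟩ := hN
      omega
    · exact Finset.mem_range.mpr (by omega)
    · omega
  simpa [CharTwo.sub_eq_add] using dvd_iff_isRoot.mpr heval

theorem X_add_one_pow_mod_two_dvd_of_reflect_eq [CharP R 2] {N : ℕ} {f : R[X]}
    (hdeg : f.natDegree ≤ N) (hf : reflect N f = f) : (X + 1) ^ (N % 2) ∣ f := by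
  rcases Nat.even_or_odd N with hN | hN
  · rw [Nat.even_iff.mp hN, pow_zero]
    exact one_dvd f
  · rw [Nat.odd_iff.mp hN, pow_one]
    exact X_add_one_dvd_of_reflect_eq hN hdeg hf

theorem reflect_eq_of_X_add_one_pow_mul [Nontrivial R] {r N : ℕ} {g : R[X]}
    (hdeg : ((X + 1) ^ r * g).natDegree ≤ r + N)
    (hrefl : reflect (r + N) ((X + 1) ^ r * g) = (X + 1) ^ r * g) :
    g.natDegree ≤ N ∧ reflect N g = g := by
  have hmonic : ((X + 1 : R[X]) ^ r).Monic := monic_X_add_one.pow r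
  have hdeg_pow : ((X + 1 : R[X]) ^ r).natDegree = r := by
    simpa using natDegree_pow_X_add_C (R := R) r 1
  have hg : g.natDegree ≤ N := by
    rcases eq_or_ne g 0 with rfl | hg0
    · simp
    · rw [hmonic.natDegree_mul' hg0, hdeg_pow] at hdeg
      omega
  refine ⟨hg, hmonic.isRegular.left ?_⟩
  rwa [reflect_mul _ _ hdeg_pow.le hg, reflect_X_add_one_pow] at hrefl

theorem coeff_X_add_one_pow_mul_mem (V : AddSubgroup R) (r : ℕ) {g : R[X]}
    (hg : ∀ j, g.coeff j ∈ V) (j : ℕ) : ((X + 1) ^ r * g).coeff j ∈ V := by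
  rw [coeff_mul]
  refine V.sum_mem fun x _ => ?_
  rw [coeff_X_add_one_pow, ← nsmul_eq_mul]
  exact V.nsmul_mem (hg _) _

theorem coeff_mem_of_coeff_X_add_one_pow_mul_mem (V : AddSubgroup R) (r : ℕ) {H : ℕ} {g : R[X]}
    (hg : ∀ j ≤ H, ((X + 1) ^ r * g).coeff j ∈ V) : ∀ j ≤ H, g.coeff j ∈ V := by
  induction r generalizing g with
  | zero => simpa using hg
  | succ r ih =>
    have hXg := ih (g := (X + 1) * g) (by simpa only [pow_succ, mul_assoc] using hg)
    intro j
    induction j with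
    | zero =>
      intro _
      simpa [add_mul, coeff_X_mul_zero] using hXg 0 (Nat.zero_le _)
    | succ j ihj =>
      intro hj
      have h := hXg (j + 1) hj
      rw [add_mul, one_mul, coeff_add, coeff_X_mul] at h
      simpa using V.sub_mem h (ihj (by omega))

theorem coeff_mem_of_reflect_eq (V : AddSubgroup R) {H : ℕ} {g : R[X]}
    (hdeg : g.natDegree ≤ 2 * H) (hrefl : reflect (2 * H) g = g) (hg : ∀ j ≤ H, g.coeff j ∈ V)
    (j : ℕ) : g.coeff j ∈ V := by
  rcases le_or_gt j H with hj | hj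
  · exact hg j hj
  rcases le_or_gt j (2 * H) with hj' | hj'
  · rw [← hrefl, coeff_reflect, revAt_le hj']
    exact hg _ (by omega)
  · rw [coeff_eq_zero_of_natDegree_lt (by omega)]
    exact V.zero_mem

theorem coeff_mem_of_X_add_one_pow_dvd_of_reflect_eq [Nontrivial R] (V : AddSubgroup R)
    {r H : ℕ} {f : R[X]} (hdvd : (X + 1) ^ r ∣ f) (hdeg : f.natDegree ≤ r + 2 * H)
    (hrefl : reflect (r + 2 * H) f = f) (hf : ∀ j ≤ H, f.coeff j ∈ V) (j : ℕ) :
    f.coeff j ∈ V := by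
  obtain ⟨g, rfl⟩ := hdvd
  obtain ⟨hgdeg, hgrefl⟩ := reflect_eq_of_X_add_one_pow_mul hdeg hrefl
  exact coeff_X_add_one_pow_mul_mem V r
    (coeff_mem_of_reflect_eq V hgdeg hgrefl (coeff_mem_of_coeff_X_add_one_pow_mul_mem V r hf)) j

end Polynomial

section

variable (m l : ℕ) (n : Fin l → ℕ)

local notation "S" => MvPolynomial (Fin m ⊕ Σ p : Fin l, Fin (n p / 2)) (ZMod 2)

theorem alS_of_lt {i : ℕ} (h : 2 * m < i) : alS m l n i = 0 := by
  rw [alS, dif_neg (by omega)]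

theorem alS_zero : alS m l n 0 = 1 := by
  rw [alS, dif_pos (Nat.zero_le _), dif_neg (by omega)]

theorem alS_sub {i : ℕ} (h : i ≤ 2 * m) : alS m l n (2 * m - i) = alS m l n i := by
  have e : min (2 * m - i) (2 * m - (2 * m - i)) = min i (2 * m - i) := by omega
  rw [alS, alS, dif_pos h, dif_pos (Nat.sub_le _ _)]
  simp only [e]

theorem beS_of_lt {p : Fin l} {i : ℕ} (h : n p < i) : beS m l n p i = 0 := by
  rw [beS, dif_neg (by omega)]

theorem beS_zero (p : Fin l) : beS m l n p 0 = 1 := by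
  rw [beS, dif_pos (Nat.zero_le _), dif_neg (by omega)]

theorem beS_sub {p : Fin l} {i : ℕ} (h : i ≤ n p) : beS m l n p (n p - i) = beS m l n p i := by
  have e : min (n p - i) (n p - (n p - i)) = min i (n p - i) := by omega
  rw [beS, beS, dif_pos h, dif_pos (Nat.sub_le _ _)]
  simp only [e]

theorem beS_mem_Bsub (p : Fin l) (i : ℕ) : beS m l n p i ∈ Bsub m l n := by
  rw [beS]
  split_ifs
  · exact Subring.subset_closure ⟨_, rfl⟩
  · exact Subring.one_mem _
  · exact Subring.zero_mem _

theorem muS_mem_Bsub (j : ℕ) : muS m l n j ∈ Bsub m l n :=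
  Subring.sum_mem _ fun _ _ => Subring.prod_mem _ fun p _ => beS_mem_Bsub m l n p _

theorem muS_zero : muS m l n 0 = 1 := by
  simp [muS, Finset.filter_true_of_mem, beS_zero]

theorem nuS_zero : nuS m l n 0 = 0 := by
  simp [nuS, alS_zero, muS_zero, CharTwo.add_self_eq_zero]

theorem nuS_of_odd {k : ℕ} (hk : Odd k) :
    nuS m l n k = ∑ i ∈ Finset.range (k / 2 + 1), alS m l n (k - 2 * i) * muS m l n i := by
  rw [nuS, cast_choose_two_mul_of_odd _ hk, add_zero]

def oddIndices : Finset ℕ := (Finset.Icc 1 m).filter Odd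

noncomputable def oddSpan : Submodule (Bsub m l n) S :=
  Submodule.span (Bsub m l n) (nuS m l n '' oddIndices m)

theorem mul_mem_oddSpan {b x : S} (hb : b ∈ Bsub m l n) (hx : x ∈ oddSpan m l n) :
    b * x ∈ oddSpan m l n := by
  simpa only [Subring.smul_def, smul_eq_mul] using Submodule.smul_mem _ (⟨b, hb⟩ : Bsub m l n) hx

theorem alS_mem_oddSpan {j : ℕ} (hj : Odd j) : alS m l n j ∈ oddSpan m l n := by
  induction j using Nat.strong_induction_on with
  | _ j ih =>
  rcases le_or_gt j m with hjm | hjm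
  · have hν := nuS_of_odd m l n hj
    rw [Finset.sum_range_succ', Nat.mul_zero, Nat.sub_zero, muS_zero, mul_one] at hν
    rw [eq_sub_of_add_eq' hν.symm]
    refine sub_mem (Submodule.subset_span ⟨j, ?_, rfl⟩) (Submodule.sum_mem _ fun i hi => ?_)
    · exact Finset.mem_filter.mpr ⟨Finset.mem_Icc.mpr ⟨hj.pos, hjm⟩, hj⟩
    · rw [Finset.mem_range] at hi
      rw [mul_comm]
      exact mul_mem_oddSpan m l n (muS_mem_Bsub m l n (i + 1))
        (ih _ (by omega) (Nat.Odd.sub_even (by omega) hj (even_two_mul _)))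
  rcases le_or_gt j (2 * m) with hj2m | hj2m
  · rw [← alS_sub m l n hj2m]
    exact ih _ (by omega) (Nat.Even.sub_odd hj2m (even_two_mul m) hj)
  · rw [alS_of_lt m l n hj2m]
    exact zero_mem _

theorem nuS_mem_oddSpan {k : ℕ} (hk : Odd k) : nuS m l n k ∈ oddSpan m l n := by
  rw [nuS_of_odd m l n hk]
  refine Submodule.sum_mem _ fun i hi => ?_
  rw [Finset.mem_range] at hi
  rw [mul_comm]
  exact mul_mem_oddSpan m l n (muS_mem_Bsub m l n i)
    (alS_mem_oddSpan m l n (Nat.Odd.sub_even (by omega) hk (even_two_mul i)))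

open Polynomial

noncomputable def alphaPoly : S[X] :=
  ∑ j ∈ Finset.range (m + 1), monomial j (alS m l n (2 * j))

noncomputable def betaPoly (p : Fin l) : S[X] :=
  ∑ i ∈ Finset.range (n p + 1), monomial i (beS m l n p i)

noncomputable def nuPoly : S[X] :=
  alphaPoly m l n * ∏ p, betaPoly m l n p + (Polynomial.X + 1) ^ (m + ∑ p, n p)

theorem coeff_alphaPoly (j : ℕ) : (alphaPoly m l n).coeff j = alS m l n (2 * j) := by
  rw [alphaPoly, coeff_sum_range_monomial]
  split_ifs with hj
  · rfl
  · rw [alS_of_lt m l n (by omega)]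

theorem coeff_betaPoly (p : Fin l) (i : ℕ) : (betaPoly m l n p).coeff i = beS m l n p i := by
  rw [betaPoly, coeff_sum_range_monomial]
  split_ifs with hi
  · rfl
  · rw [beS_of_lt m l n (by omega)]

theorem coeff_prod_betaPoly (j : ℕ) : (∏ p, betaPoly m l n p).coeff j = muS m l n j := by
  simp only [coeff_prod_univ, coeff_betaPoly, muS]

theorem coeff_nuPoly (t : ℕ) : (nuPoly m l n).coeff t = nuS m l n (2 * t) := by
  rw [nuPoly, nuS, Polynomial.coeff_add, mul_comm, Polynomial.coeff_mul,
    Finset.Nat.sum_antidiagonal_eq_sum_range_succ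
      (fun i j => (∏ p, betaPoly m l n p).coeff i * (alphaPoly m l n).coeff j),
    coeff_X_add_one_pow, cast_choose_two_mul_two_mul, Nat.mul_div_cancel_left t two_pos]
  congr 1
  refine Finset.sum_congr rfl fun i _ => ?_
  rw [coeff_prod_betaPoly, coeff_alphaPoly, mul_comm, Nat.mul_sub]

theorem natDegree_alphaPoly_le : (alphaPoly m l n).natDegree ≤ m :=
  natDegree_sum_range_monomial_le _ _

theorem natDegree_betaPoly_le (p : Fin l) : (betaPoly m l n p).natDegree ≤ n p :=
  natDegree_sum_range_monomial_le _ _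

theorem natDegree_prod_betaPoly_le : (∏ p, betaPoly m l n p).natDegree ≤ ∑ p, n p :=
  (natDegree_prod_le _ _).trans (Finset.sum_le_sum fun p _ => natDegree_betaPoly_le m l n p)

theorem natDegree_nuPoly_le : (nuPoly m l n).natDegree ≤ m + ∑ p, n p :=
  natDegree_add_le_of_degree_le
    (natDegree_mul_le_of_le (natDegree_alphaPoly_le m l n) (natDegree_prod_betaPoly_le m l n))
    (by simpa using (natDegree_pow_X_add_C (R := S) (m + ∑ p, n p) 1).le)

theorem reflect_alphaPoly : reflect m (alphaPoly m l n) = alphaPoly m l n :=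
  reflect_sum_range_monomial fun j hj => by rw [Nat.mul_sub, alS_sub m l n (by omega)]

theorem reflect_betaPoly (p : Fin l) : reflect (n p) (betaPoly m l n p) = betaPoly m l n p :=
  reflect_sum_range_monomial fun _ hi => beS_sub m l n hi

theorem reflect_nuPoly : reflect (m + ∑ p, n p) (nuPoly m l n) = nuPoly m l n := by
  rw [nuPoly, reflect_add, reflect_X_add_one_pow,
    reflect_mul _ _ (natDegree_alphaPoly_le m l n) (natDegree_prod_betaPoly_le m l n),
    reflect_prod _ _ _ (fun p _ => natDegree_betaPoly_le m l n p), reflect_alphaPoly]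
  simp only [reflect_betaPoly]

theorem X_add_one_pow_dvd_nuPoly :
    (Polynomial.X + 1 : S[X]) ^ (m % 2 + ∑ p, n p % 2) ∣ nuPoly m l n := by
  have hα : (Polynomial.X + 1 : S[X]) ^ (m % 2) ∣ alphaPoly m l n :=
    X_add_one_pow_mod_two_dvd_of_reflect_eq (natDegree_alphaPoly_le m l n) (reflect_alphaPoly m l n)
  have hβ : (Polynomial.X + 1 : S[X]) ^ (∑ p, n p % 2) ∣ ∏ p, betaPoly m l n p := by
    rw [← Finset.prod_pow_eq_pow_sum]
    exact Finset.prod_dvd_prod_of_dvd _ _ fun p _ =>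
      X_add_one_pow_mod_two_dvd_of_reflect_eq (natDegree_betaPoly_le m l n p)
        (reflect_betaPoly m l n p)
  have hle : m % 2 + ∑ p, n p % 2 ≤ m + ∑ p, n p :=
    add_le_add (Nat.mod_le _ _) (Finset.sum_le_sum fun p _ => Nat.mod_le _ _)
  refine dvd_add ?_ (pow_dvd_pow _ hle)
  rw [pow_add]
  exact mul_dvd_mul hα hβ

def evenIndices (H : ℕ) : Finset ℕ := (Finset.Icc 2 (2 * H)).filter Even

noncomputable def evenSpan : Submodule (ZMod 2) S :=
  Submodule.span (ZMod 2) (nuS m l n '' evenIndices (m / 2 + ∑ p, n p / 2))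

theorem add_sum_eq_mod_two_add_two_mul :
    m + ∑ p, n p = (m % 2 + ∑ p, n p % 2) + 2 * (m / 2 + ∑ p, n p / 2) := by
  have h : ∑ p, n p = ∑ p, n p % 2 + 2 * ∑ p, n p / 2 := by
    rw [Finset.mul_sum, ← Finset.sum_add_distrib]
    exact Finset.sum_congr rfl fun p _ => (Nat.mod_add_div _ _).symm
  have := Nat.mod_add_div m 2
  omega

theorem nuS_two_mul_mem_evenSpan (t : ℕ) : nuS m l n (2 * t) ∈ evenSpan m l n := by
  have hdeg := natDegree_nuPoly_le m l n
  have hrefl := reflect_nuPoly m l n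
  rw [add_sum_eq_mod_two_add_two_mul] at hdeg hrefl
  rw [← coeff_nuPoly]
  refine coeff_mem_of_X_add_one_pow_dvd_of_reflect_eq (evenSpan m l n).toAddSubgroup
    (X_add_one_pow_dvd_nuPoly m l n) hdeg hrefl (fun j hj => ?_) t
  rw [Submodule.mem_toAddSubgroup, coeff_nuPoly]
  rcases Nat.eq_zero_or_pos j with rfl | hj0
  · rw [nuS_zero]
    exact zero_mem _
  · exact Submodule.subset_span
      ⟨2 * j, Finset.mem_filter.mpr ⟨Finset.mem_Icc.mpr ⟨by omega, by omega⟩, even_two_mul j⟩, rfl⟩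

end

theorem stmt_16_general (m l : ℕ) (n : Fin l → ℕ) (k : ℕ) :
    (Odd k →
      (∃ c : ℕ → MvPolynomial (Fin m ⊕ Σ p : Fin l, Fin (n p / 2)) (ZMod 2),
        (∀ i, c i ∈ Bsub m l n) ∧
        nuS m l n k = ∑ j ∈ (Finset.Icc 1 m).filter (fun j => Odd j), c j * nuS m l n j) ∧
      nuS m l n k ∈ Ideal.span {x | ∃ j, Odd j ∧ 1 ≤ j ∧ j ≤ m ∧ x = nuS m l n j}) ∧
    (Even k →
      (∃ c : ℕ → ZMod 2,
        nuS m l n k =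
          ∑ j ∈ (Finset.Icc 2 (2 * (m / 2 + ∑ p, n p / 2))).filter (fun j => Even j),
            c j • nuS m l n j) ∧
      nuS m l n k ∈
        Ideal.span
          {x | ∃ j, Even j ∧ 2 ≤ j ∧ j ≤ 2 * (m / 2 + ∑ p, n p / 2) ∧ x = nuS m l n j}) := by
  refine ⟨fun hk => ?_, fun hk => ?_⟩
  · have hspan := nuS_mem_oddSpan m l n hk
    obtain ⟨c, hc⟩ := (Submodule.mem_span_image_finset_iff_exists_fun' _).mp hspan
    refine ⟨⟨fun j => c j, fun j => (c j).2, hc.symm⟩, ?_⟩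
    rw [← image_filter_Icc]
    exact Submodule.span_le_restrictScalars (Bsub m l n) _ _ hspan
  · obtain ⟨t, rfl⟩ := hk
    rw [← two_mul]
    have hspan := nuS_two_mul_mem_evenSpan m l n t
    obtain ⟨c, hc⟩ := (Submodule.mem_span_image_finset_iff_exists_fun' _).mp hspan
    refine ⟨⟨c, hc.symm⟩, ?_⟩
    rw [← image_filter_Icc]
    exact Submodule.span_le_restrictScalars (ZMod 2) _ _ hspan

/-- For `k ≥ 1`: if `k` is odd, `ν_k` is a `B`-linear combination of the `ν_j` with `j` odd,
`1 ≤ j ≤ m` (in particular it lies in the ideal they generate); if `k` is even, `ν_k` is an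
`𝔽₂`-linear combination of the `ν_j` with `j` even, `2 ≤ j ≤ 2h'` (in particular it lies in
the ideal they generate), where `h' = ⌊m/2⌋ + ⌊n₁/2⌋ + ⋯ + ⌊n_l/2⌋`. -/
theorem stmt_16 (m l : ℕ) (hm : 1 ≤ m) (hl : 1 ≤ l) (n : Fin l → ℕ) (hn : ∀ p, 1 ≤ n p)
    (k : ℕ) (hk : 1 ≤ k) :
    (Odd k →
      (∃ c : ℕ → MvPolynomial (Fin m ⊕ Σ p : Fin l, Fin (n p / 2)) (ZMod 2),
        (∀ i, c i ∈ Bsub m l n) ∧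
        nuS m l n k = ∑ j ∈ (Finset.Icc 1 m).filter (fun j => Odd j), c j * nuS m l n j) ∧
      nuS m l n k ∈ Ideal.span {x | ∃ j, Odd j ∧ 1 ≤ j ∧ j ≤ m ∧ x = nuS m l n j}) ∧
    (Even k →
      (∃ c : ℕ → ZMod 2,
        nuS m l n k =
          ∑ j ∈ (Finset.Icc 2 (2 * (m / 2 + ∑ p, n p / 2))).filter (fun j => Even j),
            c j • nuS m l n j) ∧
      nuS m l n k ∈
        Ideal.span
          {x | ∃ j, Even j ∧ 2 ≤ j ∧ j ≤ 2 * (m / 2 + ∑ p, n p / 2) ∧ x = nuS m l n j}) :=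
  stmt_16_general m l n k
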